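/- Let V̄ = ⊕_{i=1}^m I[b'_i, d'_i] and V' = ⊕_{i=1}^m I[b_i, d'_i] be representations of A_w with b_i ≤ b'_i ≤ min_j(d'_j) for all i, and let ι: V̄ → V' be the morphism whose matrix form is diagonal with (i,i)-entry the canonical inclusion f: I[b'_i,d'_i] → I[b_i,d'_i]. Suppose φ_1: V̄ → V̄ has diagonal matrix form with scalar entries c_1,...,c_m, φ_2: V' → V' is any endomorphism, and ι ∘ φ_1 = φ_2 ∘ ι. Then the matrix form of φ_2 is also diagonal with the same scalar entries c_1,...,c_m. -/

import Mathlib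

open scoped Classical

/-- A persistence module over a poset `P`: a functor `P → vect_K`. -/
structure PersMod (K : Type) [Field K] (P : Type) [Preorder P] : Type 1 where
  V : P → Type
  [acg : ∀ p, AddCommGroup (V p)]
  [mod : ∀ p, Module K (V p)]
  map : ∀ {p q : P}, p ≤ q → (V p →ₗ[K] V q)
  map_id : ∀ p : P, map (le_refl p) = LinearMap.id
  map_comp : ∀ {p q r : P} (hpq : p ≤ q) (hqr : q ≤ r),
    map (le_trans hpq hqr) = (map hqr).comp (map hpq)

attribute [instance] PersMod.acg PersMod.mod

variable {K : Type} [Field K] {P : Type} [Preorder P]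

/-- The space of morphisms (natural transformations) between two persistence modules,
as a submodule of the product of the spaces of linear maps. -/
def HomSpace (M N : PersMod K P) : Submodule K (∀ p, M.V p →ₗ[K] N.V p) where
  carrier := {f | ∀ (p q : P) (h : p ≤ q), (N.map h).comp (f p) = (f q).comp (M.map h)}
  add_mem' := by
    intro f g hf hg p q h
    simp only [Pi.add_apply, LinearMap.comp_add, LinearMap.add_comp, hf p q h, hg p q h]
  zero_mem' := by intro p q h; simp
  smul_mem' := by
    intro c f hf p q h
    simp only [Pi.smul_apply, LinearMap.comp_smul, LinearMap.smul_comp, hf p q h]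

/-- Helper: an element of the zero part of an interval module is zero. -/
lemma seg_val_zero {c : Prop} {inst : Decidable c} (h : ¬c)
    (x : ↥(@ite _ c inst (⊤ : Submodule K K) ⊥)) :
    (x : K) = 0 := by
  obtain ⟨v, hv⟩ := x
  rw [if_neg h] at hv
  exact (Submodule.mem_bot K).mp hv

/-- The interval (segment / rectangle) module `I[a,b]`: value `K` on points `x` with
`a ≤ x ≤ b`, zero elsewhere, identity internal maps. -/
noncomputable def seg (a b : P) : PersMod K P where
  V x := ↥(if a ≤ x ∧ x ≤ b then (⊤ : Submodule K K) else ⊥)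
  map {x y} hxy :=
    { toFun := fun c => ⟨if a ≤ x ∧ y ≤ b then (c : K) else 0, by
        by_cases hc : a ≤ x ∧ y ≤ b
        · rw [if_pos hc, if_pos ⟨le_trans hc.1 hxy, hc.2⟩]; trivial
        · rw [if_neg hc]; exact Submodule.zero_mem _⟩
      map_add' := by
        intro c d; apply Subtype.ext
        by_cases hc : a ≤ x ∧ y ≤ b <;> simp [hc]
      map_smul' := by
        intro r c; apply Subtype.ext
        by_cases hc : a ≤ x ∧ y ≤ b <;> simp [hc] }
  map_id := by
    intro p
    apply LinearMap.ext; intro c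
    apply Subtype.ext
    show (if a ≤ p ∧ p ≤ b then (c : K) else 0) = (c : K)
    by_cases hc : a ≤ p ∧ p ≤ b
    · rw [if_pos hc]
    · rw [seg_val_zero hc c, ite_self]
  map_comp := by
    intro p q r hpq hqr
    apply LinearMap.ext; intro c
    apply Subtype.ext
    show (if a ≤ p ∧ r ≤ b then (c : K) else 0)
      = (if a ≤ q ∧ r ≤ b then (if a ≤ p ∧ q ≤ b then (c : K) else 0) else 0)
    by_cases h1 : a ≤ p ∧ r ≤ b
    · rw [if_pos h1,
        if_pos (show a ≤ q ∧ r ≤ b from ⟨le_trans h1.1 hpq, h1.2⟩),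
        if_pos (show a ≤ p ∧ q ≤ b from ⟨h1.1, le_trans hqr h1.2⟩)]
    · rw [if_neg h1]
      by_cases h2 : a ≤ q ∧ r ≤ b
      · rw [if_pos h2, if_neg (fun h3 => h1 ⟨h3.1, h2.2⟩)]
      · rw [if_neg h2]

/-- The canonical morphism `I[a,b] → I[c,d]`: identity on the intersection, zero elsewhere. -/
noncomputable def canonMap (a b c d : P) (p : P) :
    (seg (K := K) a b).V p →ₗ[K] (seg (K := K) c d).V p where
  toFun v := ⟨if c ≤ p ∧ p ≤ d then v.1 else 0, by
    by_cases hc : c ≤ p ∧ p ≤ d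
    · simp only [if_pos hc]; trivial
    · simp only [if_neg hc]; exact Submodule.zero_mem _⟩
  map_add' := by
    intro v w; apply Subtype.ext
    show (if c ≤ p ∧ p ≤ d then (v + w).1 else 0)
      = (if c ≤ p ∧ p ≤ d then v.1 else 0) + (if c ≤ p ∧ p ≤ d then w.1 else 0)
    by_cases hc : c ≤ p ∧ p ≤ d
    · simp only [if_pos hc]; rfl
    · simp only [if_neg hc]; simp
  map_smul' := by
    intro r v; apply Subtype.ext
    show (if c ≤ p ∧ p ≤ d then (r • v).1 else 0) = r • (if c ≤ p ∧ p ≤ d then v.1 else 0)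
    by_cases hc : c ≤ p ∧ p ≤ d
    · simp only [if_pos hc]; rfl
    · simp only [if_neg hc]; simp

/-- Finite direct sum of persistence modules. -/
noncomputable def dsum {m : ℕ} (M : Fin m → PersMod K P) : PersMod K P where
  V p := ∀ i, (M i).V p
  map h := LinearMap.pi (fun i => ((M i).map h).comp (LinearMap.proj i))
  map_id := by
    intro p
    apply LinearMap.ext; intro v; funext i
    simp [LinearMap.pi, (M i).map_id]
  map_comp := by
    intro p q r h1 h2
    apply LinearMap.ext; intro v; funext i
    simp [LinearMap.pi, (M i).map_comp h1 h2]

/-- Direct sum of two persistence modules. -/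
noncomputable def dsum2 (A B : PersMod K P) : PersMod K P where
  V p := A.V p × B.V p
  map h := (A.map h).prodMap (B.map h)
  map_id := by
    intro p
    show (A.map (le_refl p)).prodMap (B.map (le_refl p)) = LinearMap.id
    rw [A.map_id, B.map_id]
    exact LinearMap.prodMap_id
  map_comp := by
    intro p q r h1 h2
    show (A.map (le_trans h1 h2)).prodMap (B.map (le_trans h1 h2))
      = ((A.map h2).prodMap (B.map h2)).comp ((A.map h1).prodMap (B.map h1))
    rw [A.map_comp h1 h2, B.map_comp h1 h2]
    exact (LinearMap.prodMap_comp _ _ _ _).symm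

/-- Isomorphism of persistence modules. -/
def PersIso (M N : PersMod K P) : Prop :=
  ∃ f ∈ HomSpace M N, ∀ p, Function.Bijective (f p)

/-- The endomorphism algebra of a persistence module. -/
def EndAlg (M : PersMod K P) : Subalgebra K (∀ p, Module.End K (M.V p)) where
  carrier := {f | ∀ (p q : P) (h : p ≤ q), (M.map h).comp (f p) = (f q).comp (M.map h)}
  add_mem' := by
    intro f g hf hg p q h
    simp only [Pi.add_apply, LinearMap.comp_add, LinearMap.add_comp, hf p q h, hg p q h]
  mul_mem' := by
    intro f g hf hg p q h
    show (M.map h).comp ((f p).comp (g p)) = ((f q).comp (g q)).comp (M.map h)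
    rw [← LinearMap.comp_assoc, hf p q h, LinearMap.comp_assoc, hg p q h,
      LinearMap.comp_assoc]
  one_mem' := by intro p q h; rfl
  algebraMap_mem' := by
    intro c p q h
    apply LinearMap.ext; intro v
    simp only [Pi.algebraMap_apply, Module.algebraMap_end_eq_smul_id, LinearMap.comp_apply,
      LinearMap.smul_apply, LinearMap.id_apply, map_smul]

/-- Restriction of a `ℤ×ℤ`-persistence module along a monotone map (a "line"). -/
noncomputable def restrict (L : ℤ → ℤ × ℤ) (hL : Monotone L) (M : PersMod K (ℤ × ℤ)) :
    PersMod K ℤ where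
  V i := M.V (L i)
  map h := M.map (hL h)
  map_id := fun p => M.map_id (L p)
  map_comp := fun h1 h2 => M.map_comp (hL h1) (hL h2)


/-!
Push `v ∈ I[b_i, d'_i]_p` forward to `q = max p b'_i`. There its image lies in the image of
`ι_q`, so `ι ∘ φ₁ = φ₂ ∘ ι` and naturality of `φ₂` compute the image of `φ₂_p (v e_i)` at `q`.
Since every `b'_i` is at most every `d'_j`, the structure map `V'_p → V'_q` kills no component
that is nonzero at `p`, so it is injective and the image determines `φ₂_p (v e_i)`.
-/

theorem HomSpace.naturality_apply {M N : PersMod K P} {φ : ∀ p, M.V p →ₗ[K] N.V p}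
    (hφ : φ ∈ HomSpace M N) {p q : P} (h : p ≤ q) (x : M.V p) :
    N.map h (φ p x) = φ q (M.map h x) :=
  LinearMap.congr_fun (hφ p q h) x

theorem seg_map_coe_of_le {a b p q : P} (h : p ≤ q) (ha : a ≤ p) (hb : q ≤ b)
    (x : (seg (K := K) a b).V p) : ((seg (K := K) a b).map h x).1 = x.1 :=
  if_pos ⟨ha, hb⟩

theorem canonMap_coe_of_mem {a b c d p : P} (hc : c ≤ p) (hd : p ≤ d)
    (x : (seg (K := K) a b).V p) : (canonMap a b c d p x).1 = x.1 :=
  if_pos ⟨hc, hd⟩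

theorem dsum_map_single {m : ℕ} (M : Fin m → PersMod K P) {p q : P} (h : p ≤ q) (i : Fin m)
    (x : (M i).V p) : (dsum M).map h (Pi.single i x) = Pi.single i ((M i).map h x) :=
  (Pi.single_op (fun k => (M k).map h) (fun _ => map_zero _) i x).symm

theorem dsum_seg_map_injective {m : ℕ} (b d : Fin m → P) {p q : P} (h : p ≤ q)
    (hd : ∀ j, p ≤ d j → q ≤ d j) :
    Function.Injective ((dsum fun j => seg (K := K) (b j) (d j)).map h) := by
  intro x y hxy
  funext j
  apply Subtype.ext
  by_cases hj : b j ≤ p ∧ p ≤ d j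
  · have hmap := seg_map_coe_of_le (K := K) h hj.1 (hd j hj.2)
    calc (x j).1 = ((seg (b j) (d j)).map h (x j)).1 := (hmap _).symm
      _ = ((seg (b j) (d j)).map h (y j)).1 := congrArg (fun z => (z j).1) hxy
      _ = (y j).1 := hmap _
  · exact (seg_val_zero hj (x j)).trans (seg_val_zero hj (y j)).symm

theorem apply_single_eq_of_comm_canonMap {T : Type} [LinearOrder T] {m : ℕ}
    {b b' d' : Fin m → T} {c : Fin m → K} (hmin : ∀ i j, b' i ≤ d' j)
    {φ : ∀ p : T, (dsum (K := K) fun i => seg (b i) (d' i)).V p →ₗ[K]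
      (dsum (K := K) fun i => seg (b i) (d' i)).V p}
    (hφ : φ ∈ HomSpace (dsum fun i => seg (b i) (d' i)) (dsum fun i => seg (b i) (d' i)))
    (hcomm : ∀ (p : T) (v : ∀ k, (seg (K := K) (b' k) (d' k)).V p) (k : Fin m),
      canonMap (b' k) (d' k) (b k) (d' k) p (c k • v k)
        = φ p (fun j => canonMap (b' j) (d' j) (b j) (d' j) p (v j)) k)
    (p : T) (i : Fin m) (v : (seg (K := K) (b i) (d' i)).V p) :
    φ p (Pi.single i v) = Pi.single i (c i • v) := by
  by_cases hip : b i ≤ p ∧ p ≤ d' i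
  swap
  · obtain rfl : v = 0 := Subtype.ext (seg_val_zero hip v)
    rw [Pi.single_zero, smul_zero, Pi.single_zero]
    exact map_zero (φ p)
  set q := max p (b' i)
  have hpq : p ≤ q := le_max_left _ _
  have hq : b' i ≤ q ∧ q ≤ d' i := ⟨le_max_right _ _, max_le hip.2 (hmin i i)⟩
  let V' := dsum fun k => seg (K := K) (b k) (d' k)
  let ι : (∀ k, (seg (K := K) (b' k) (d' k)).V q) → V'.V q :=
    fun x k => canonMap (b' k) (d' k) (b k) (d' k) q (x k)
  let lift : (seg (K := K) (b i) (d' i)).V p → (seg (K := K) (b' i) (d' i)).V q :=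
    fun u => ⟨u.1, by rw [if_pos hq]; trivial⟩
  let e : (seg (K := K) (b i) (d' i)).V p → ∀ k, (seg (K := K) (b' k) (d' k)).V q :=
    fun u => Pi.single i (lift u)
  have hshift : ∀ u, V'.map hpq (Pi.single i u) = ι (e u) := fun u => by
    refine (dsum_map_single _ hpq i u).trans ((congrArg (Pi.single i) ?_).trans
      (Pi.single_op (fun k => canonMap (K := K) (b' k) (d' k) (b k) (d' k) q)
        (fun _ => map_zero _) i (lift u)))
    exact Subtype.ext ((seg_map_coe_of_le hpq hip.1 hq.2 u).trans
      (canonMap_coe_of_mem (hip.1.trans hpq) hq.2 (lift u)).symm)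
  have he_smul : e (c i • v) = fun k => c k • e v k :=
    Pi.single_op (fun k (x : (seg (K := K) (b' k) (d' k)).V q) => c k • x)
      (fun k => smul_zero (c k)) i (lift v)
  apply dsum_seg_map_injective b d' hpq fun j hj => max_le hj (hmin i j)
  calc V'.map hpq (φ p (Pi.single i v))
      = φ q (V'.map hpq (Pi.single i v)) := HomSpace.naturality_apply hφ hpq _
    _ = φ q (ι (e v)) := by rw [hshift]
    _ = ι (fun k => c k • e v k) := (funext (hcomm q (e v))).symm
    _ = V'.map hpq (Pi.single i (c i • v)) := by rw [hshift, he_smul]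

theorem stmt_7_general (K : Type) [Field K] (m : ℕ) (b b' d' : Fin m → ℤ) (c : Fin m → K)
    (hmin : ∀ i j, b' i ≤ d' j)
    (phi2 : ∀ p : ℤ, (dsum (K := K) fun i => seg (b i) (d' i)).V p →ₗ[K]
      (dsum (K := K) fun i => seg (b i) (d' i)).V p)
    (hphi2 : phi2 ∈ HomSpace (dsum fun i => seg (b i) (d' i)) (dsum fun i => seg (b i) (d' i)))
    (hcomm : ∀ (p : ℤ) (v : ∀ k, (seg (K := K) (b' k) (d' k)).V p) (k : Fin m),
      canonMap (b' k) (d' k) (b k) (d' k) p (c k • v k)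
        = phi2 p (fun j => canonMap (b' j) (d' j) (b j) (d' j) p (v j)) k) :
    ∀ (p : ℤ) (i j : Fin m) (v : (seg (K := K) (b i) (d' i)).V p),
      (i ≠ j → phi2 p (Pi.single i v) j = 0) ∧ phi2 p (Pi.single i v) i = c i • v := by
  intro p i j v
  rw [apply_single_eq_of_comm_canonMap hmin hphi2 hcomm p i v]
  exact ⟨fun hij => Pi.single_eq_of_ne' hij _, Pi.single_eq_same _ _⟩

/-- Propagation of nonzeros through the verticalization morphism
`ι : V̄ = ⊕ I[b'_i, d'_i] → V' = ⊕ I[b_i, d'_i]`: if `ι ∘ φ₁ = φ₂ ∘ ι` with `φ₁` diagonal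
with scalars `c_i`, then `φ₂` is diagonal with the same scalars. -/
theorem stmt_7 (K : Type) [Field K] (m : ℕ) (b b' d' : Fin m → ℤ) (c : Fin m → K)
    (hbb' : ∀ i, b i ≤ b' i)
    (hmin : ∀ i j, b' i ≤ d' j)
    (phi2 : ∀ p : ℤ, (dsum (K := K) fun i => seg (b i) (d' i)).V p →ₗ[K]
      (dsum (K := K) fun i => seg (b i) (d' i)).V p)
    (hphi2 : phi2 ∈ HomSpace (dsum fun i => seg (b i) (d' i)) (dsum fun i => seg (b i) (d' i)))
    (hcomm : ∀ (p : ℤ) (v : ∀ k, (seg (K := K) (b' k) (d' k)).V p) (k : Fin m),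
      canonMap (b' k) (d' k) (b k) (d' k) p (c k • v k)
        = phi2 p (fun j => canonMap (b' j) (d' j) (b j) (d' j) p (v j)) k) :
    ∀ (p : ℤ) (i j : Fin m) (v : (seg (K := K) (b i) (d' i)).V p),
      (i ≠ j → phi2 p (Pi.single i v) j = 0) ∧ phi2 p (Pi.single i v) i = c i • v :=
  stmt_7_general K m b b' d' c hmin phi2 hphi2 hcomm
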